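/- arXiv:2307.04270 — 2 statements merged into one kernel-verified Lean document; each statement's English description precedes it below -/
import Mathlib

section
/- Let α, β ∈ MvPolynomial (Fin n) ℤ. Then the evaluations of the ring terms α* and β* in the ⊥-enlargement of ℚ agree under every valuation σ : Fin n → Option ℚ if and only if E_wcr,⊥ ⊢ α* = β*. -/
universe u

/-- Ring-with-`⊥` terms in `n` variables: variables, constants `0`, `1` and `⊥`,
negation, addition and multiplication.  Terms avoiding the constructor `bot`
are the ring terms. -/
inductive RTerm (n : ℕ) : Type where
  | var : Fin n → RTerm n
  | zero : RTerm n
  | one : RTerm n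
  | bot : RTerm n
  | neg : RTerm n → RTerm n
  | add : RTerm n → RTerm n → RTerm n
  | mul : RTerm n → RTerm n → RTerm n

namespace RTerm

/-- Addition on the `⊥`-enlargement `Option R` of a commutative ring `R`. -/
def bAdd {R : Type u} [CommRing R] : Option R → Option R → Option R
  | some a, some b => some (a + b)
  | _, _ => none

/-- Multiplication on the `⊥`-enlargement `Option R` of a commutative ring `R`. -/
def bMul {R : Type u} [CommRing R] : Option R → Option R → Option R
  | some a, some b => some (a * b)
  | _, _ => none

/-- Negation on the `⊥`-enlargement `Option R` of a commutative ring `R`. -/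
def bNeg {R : Type u} [CommRing R] : Option R → Option R
  | some a => some (-a)
  | none => none

/-- Evaluation of a ring-with-`⊥` term in the `⊥`-enlargement `Option R` of a
commutative ring `R`, under a valuation `σ : Fin n → Option R`. -/
def evalB {n : ℕ} {R : Type u} [CommRing R] (σ : Fin n → Option R) :
    RTerm n → Option R
  | var i => σ i
  | zero => some 0
  | one => some 1
  | bot => none
  | neg t => bNeg (t.evalB σ)
  | add t s => bAdd (t.evalB σ) (s.evalB σ)
  | mul t s => bMul (t.evalB σ) (s.evalB σ)

/-- Derivability in equational logic from the axioms `E_wcr,⊥`: the least relation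
containing all substitution instances of the eleven axioms that is reflexive,
symmetric, transitive and closed under the term-forming operations. -/
inductive DerivWcr {n : ℕ} : RTerm n → RTerm n → Prop
  | add_assoc (x y z : RTerm n) : DerivWcr ((x.add y).add z) (x.add (y.add z))
  | add_comm (x y : RTerm n) : DerivWcr (x.add y) (y.add x)
  | add_zero (x : RTerm n) : DerivWcr (x.add zero) x
  | add_neg (x : RTerm n) : DerivWcr (x.add x.neg) (zero.mul x)
  | mul_assoc (x y z : RTerm n) : DerivWcr (x.mul (y.mul z)) ((x.mul y).mul z)
  | mul_comm (x y : RTerm n) : DerivWcr (x.mul y) (y.mul x)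
  | one_mul (x : RTerm n) : DerivWcr (one.mul x) x
  | mul_add (x y z : RTerm n) : DerivWcr (x.mul (y.add z)) ((x.mul y).add (x.mul z))
  | neg_neg (x : RTerm n) : DerivWcr x.neg.neg x
  | zero_mul_add (x y : RTerm n) : DerivWcr (zero.mul (x.add y)) (zero.mul (x.mul y))
  | add_bot (x : RTerm n) : DerivWcr (x.add bot) bot
  | refl (x : RTerm n) : DerivWcr x x
  | symm {x y : RTerm n} : DerivWcr x y → DerivWcr y x
  | trans {x y z : RTerm n} : DerivWcr x y → DerivWcr y z → DerivWcr x z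
  | neg_congr {x y : RTerm n} : DerivWcr x y → DerivWcr x.neg y.neg
  | add_congr {x x' y y' : RTerm n} :
      DerivWcr x x' → DerivWcr y y' → DerivWcr (x.add y) (x'.add y')
  | mul_congr {x x' y y' : RTerm n} :
      DerivWcr x x' → DerivWcr y y' → DerivWcr (x.mul y) (x'.mul y')

/-- Term powers: `pow t 0 = 1`, `pow t 1 = t`, `pow t (k+1) = pow t k · t`. -/
def pow {n : ℕ} (t : RTerm n) : ℕ → RTerm n
  | 0 => one
  | 1 => t
  | k + 2 => (t.pow (k + 1)).mul t

/-- Numerals for natural numbers: `0`, `1`, `n+1 = n + 1`. -/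
def natNumeral (n : ℕ) : ℕ → RTerm n
  | 0 => zero
  | 1 => one
  | k + 2 => (natNumeral n (k + 1)).add one

/-- Numerals for integers, built from `0`, `1`, `+` and negation. -/
def intNumeral (n : ℕ) (c : ℤ) : RTerm n :=
  if 0 ≤ c then natNumeral n c.toNat else (natNumeral n (-c).toNat).neg

/-- The term `x₁^{d₁} ⋯ xₙ^{dₙ}` representing a monomial `d`. -/
def monTerm {n : ℕ} (d : Fin n →₀ ℕ) : RTerm n :=
  ((List.finRange n).map fun i => (var i).pow (d i)).foldr mul one

/-- `polyTerm α` is the canonical ring term `α*` representing the integer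
multivariate polynomial `α`: the sum, over the monomials in the support of `α`,
of the numeral of the coefficient times the product of the variables raised to
their powers (and `0* = 0`). -/
noncomputable def polyTerm {n : ℕ} (α : MvPolynomial (Fin n) ℤ) : RTerm n :=
  (α.support.toList.map fun d => (intNumeral n (α.coeff d)).mul (monTerm d)).foldr add zero

end RTerm


namespace RTerm

variable {R : Type u} [CommRing R] {n : ℕ}

lemma bAdd_assoc (a b c : Option R) : bAdd (bAdd a b) c = bAdd a (bAdd b c) := by
  cases a <;> cases b <;> cases c <;> simp [bAdd, add_assoc]

lemma bAdd_comm (a b : Option R) : bAdd a b = bAdd b a := by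
  cases a <;> cases b <;> simp [bAdd, add_comm]

lemma bAdd_zero (a : Option R) : bAdd a (some 0) = a := by
  cases a <;> simp [bAdd]

lemma bAdd_neg (a : Option R) : bAdd a (bNeg a) = bMul (some 0) a := by
  cases a <;> simp [bAdd, bNeg, bMul]

lemma bMul_assoc (a b c : Option R) : bMul a (bMul b c) = bMul (bMul a b) c := by
  cases a <;> cases b <;> cases c <;> simp [bMul, mul_assoc]

lemma bMul_comm (a b : Option R) : bMul a b = bMul b a := by
  cases a <;> cases b <;> simp [bMul, mul_comm]

lemma bOne_mul (a : Option R) : bMul (some 1) a = a := by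
  cases a <;> simp [bMul]

lemma bMul_add (a b c : Option R) : bMul a (bAdd b c) = bAdd (bMul a b) (bMul a c) := by
  cases a <;> cases b <;> cases c <;> simp [bMul, bAdd, mul_add]

lemma bNeg_neg (a : Option R) : bNeg (bNeg a) = a := by
  cases a <;> simp [bNeg]

lemma bZero_mul_add (a b : Option R) :
    bMul (some 0) (bAdd a b) = bMul (some 0) (bMul a b) := by
  cases a <;> cases b <;> simp [bMul, bAdd]

lemma bAdd_bot (a : Option R) : bAdd a none = none := by
  cases a <;> simp [bAdd]

lemma evalB_eq_of_derivWcr {σ : Fin n → Option R} {t s : RTerm n}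
    (h : DerivWcr t s) : evalB σ t = evalB σ s := by
  induction h with
  | add_assoc x y z => simp [evalB, bAdd_assoc]
  | add_comm x y => simp [evalB, bAdd_comm]
  | add_zero x => simp [evalB, bAdd_zero]
  | add_neg x => simp [evalB, bAdd_neg]
  | mul_assoc x y z => simp [evalB, bMul_assoc]
  | mul_comm x y => simp [evalB, bMul_comm]
  | one_mul x => simp [evalB, bOne_mul]
  | mul_add x y z => simp [evalB, bMul_add]
  | neg_neg x => simp [evalB, bNeg_neg]
  | zero_mul_add x y => simp [evalB, bZero_mul_add]
  | add_bot x => simp [evalB, bAdd_bot]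
  | refl x => rfl
  | symm _ ih => exact ih.symm
  | trans _ _ ih1 ih2 => exact ih1.trans ih2
  | neg_congr _ ih => simp [evalB, ih]
  | add_congr _ _ ih1 ih2 => simp [evalB, ih1, ih2]
  | mul_congr _ _ ih1 ih2 => simp [evalB, ih1, ih2]

lemma evalB_natNumeral (σ : Fin n → Option ℚ) :
    ∀ k : ℕ, evalB σ (natNumeral n k) = some (k : ℚ)
  | 0 => by simp [natNumeral, evalB]
  | 1 => by simp [natNumeral, evalB]
  | (k + 2) => by
      rw [show natNumeral n (k + 2) = (natNumeral n (k + 1)).add one from rfl]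
      simp only [evalB, evalB_natNumeral σ (k + 1), bAdd]
      push_cast; ring_nf

lemma evalB_intNumeral (σ : Fin n → Option ℚ) (c : ℤ) :
    evalB σ (intNumeral n c) = some (c : ℚ) := by
  unfold intNumeral
  split
  · rename_i h
    rw [evalB_natNumeral]
    congr 1
    exact_mod_cast congrArg (Int.cast : ℤ → ℚ) (Int.toNat_of_nonneg h)
  · rename_i h
    have h' : (0:ℤ) ≤ -c := by omega
    show bNeg (evalB σ (natNumeral n (-c).toNat)) = some (c : ℚ)
    rw [evalB_natNumeral]
    simp only [bNeg]
    congr 1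
    have : (((-c).toNat : ℤ) : ℚ) = ((-c : ℤ) : ℚ) := by
      exact_mod_cast congrArg (Int.cast : ℤ → ℚ) (Int.toNat_of_nonneg h')
    push_cast at this ⊢
    linarith

lemma evalB_pow (σ : Fin n → Option ℚ) (t : RTerm n) (a : ℚ)
    (h : evalB σ t = some a) : ∀ k : ℕ, evalB σ (t.pow k) = some (a ^ k)
  | 0 => by simp [pow, evalB]
  | 1 => by simpa [pow] using h
  | (k + 2) => by
      rw [show t.pow (k + 2) = (t.pow (k + 1)).mul t from rfl]
      simp only [evalB, evalB_pow σ t a h (k + 1), h, bMul]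
      congr 1; ring

lemma evalB_monTerm (x : Fin n → ℚ) (d : Fin n →₀ ℕ) :
    evalB (fun i => some (x i)) (monTerm d) = some (∏ i, x i ^ d i) := by
  rw [Fin.prod_univ_def]
  unfold monTerm
  induction (List.finRange n) with
  | nil => simp [evalB]
  | cons i l ih =>
      simp only [List.map_cons, List.foldr_cons, evalB, ih,
        evalB_pow (fun i => some (x i)) (var i) (x i) rfl (d i), bMul,
        List.prod_cons]

lemma evalB_polyTerm (x : Fin n → ℚ) (α : MvPolynomial (Fin n) ℤ) :
    evalB (fun i => some (x i)) (polyTerm α) =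
      some (MvPolynomial.eval x (MvPolynomial.map (Int.castRingHom ℚ) α)) := by
  rw [MvPolynomial.eval_map, MvPolynomial.eval₂_eq', ← Finset.sum_map_toList]
  unfold polyTerm
  induction α.support.toList with
  | nil => simp [evalB]
  | cons d l ih =>
      simp only [List.map_cons, List.foldr_cons, evalB, ih,
        evalB_intNumeral (fun i => some (x i)) (α.coeff d),
        evalB_monTerm x d, bMul, bAdd, List.sum_cons]
      simp [Int.castRingHom]

end RTerm

open RTerm in
/-- For integer multivariate polynomials `α, β`, the terms `α*` and `β*` evaluate
equally in the `⊥`-enlargement of `ℚ` under every valuation iff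
`E_wcr,⊥ ⊢ α* = β*`. -/
theorem polyTerm_eval_rat_iff_derivWcr (n : ℕ) (α β : MvPolynomial (Fin n) ℤ) :
    (∀ σ : Fin n → Option ℚ, (polyTerm α).evalB σ = (polyTerm β).evalB σ) ↔
      DerivWcr (polyTerm α) (polyTerm β) := by
  constructor
  · intro h
    have key : MvPolynomial.map (Int.castRingHom ℚ) α = MvPolynomial.map (Int.castRingHom ℚ) β := by
      apply MvPolynomial.funext
      intro x
      have hx := h (fun i => some (x i))
      rw [evalB_polyTerm, evalB_polyTerm] at hx
      exact Option.some_injective _ hx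
    have hab : α = β :=
      MvPolynomial.map_injective (Int.castRingHom ℚ)
        (fun a b hab => by
          have : (a : ℚ) = (b : ℚ) := by simpa [Int.castRingHom] using hab
          exact_mod_cast this) key
    rw [hab]
    exact DerivWcr.refl _
  · intro h σ
    exact evalB_eq_of_derivWcr h
end

section
/- Quasi-polynomial reduction: let t be a ring-with-⊥ term in n variables. Then either E_wcr,⊥ ⊢ t = ⊥, or there exist α ∈ MvPolynomial (Fin n) ℤ and a finite set S of variables disjoint from the variables of α such that E_wcr,⊥ ⊢ t = α* + 0·∏_{i∈S} x_i (where for S = ∅ the right-hand side is taken to be α*); that is, t is provably equal to ⊥ or to a quasi-polynomial sumterm. -/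
universe u

namespace RTerm

/-- Product of a list of terms (empty product `1`, singleton product the term
itself). -/
def prodList {n : ℕ} : List (RTerm n) → RTerm n
  | [] => one
  | [t] => t
  | t :: ts => t.mul (prodList ts)

end RTerm

/-!
Every `⊥` absorbs the whole term (`x + ⊥ = ⊥`, and `0·⊥ = ⊥`, `x·⊥ = ⊥` are derivable), so
either `t = ⊥` or `t` is a ring term. The axioms are those of a commutative ring, except that
`x + (-x)` is only `0·x`. Such a junk summand `0·x` remembers nothing but the set of variables
of `x`, because `0·(x + y) = 0·(x·y) = 0·x + 0·y` and `0·(x·x) = 0·x`, and it is absorbed by any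
ring term containing those variables (`x + 0·x = x`). Hence, after adding `0·∏_{i∈V} xᵢ` with `V`
the variables of `t`, all the ring laws hold and `t` normalises to `α* + 0·∏_{i∈V} xᵢ` for a
polynomial `α` as in a commutative ring; finally `α*` absorbs the junk variables it contains.
-/

namespace MvPolynomial

variable {σ R : Type*} [CommSemiring R]

@[elab_as_elim]
theorem induction_on_monomial_add {motive : MvPolynomial σ R → Prop} (p : MvPolynomial σ R)
    (zero : motive 0)
    (monomial_add : ∀ (d : σ →₀ ℕ) (c : R) (q : MvPolynomial σ R),
      d ∉ q.support → c ≠ 0 → motive q → motive (monomial d c + q)) : motive p :=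
  AddMonoidAlgebra.induction p zero monomial_add

theorem support_monomial_add [DecidableEq σ] {d : σ →₀ ℕ} {c : R} {q : MvPolynomial σ R}
    (hd : d ∉ q.support) (hc : c ≠ 0) : (monomial d c + q).support = insert d q.support := by
  ext e
  rcases eq_or_ne e d with rfl | he
  · simp [mem_support_iff, hc, notMem_support_iff.mp hd]
  · simp [mem_support_iff, coeff_monomial, he, Ne.symm he]

theorem vars_monomial_add [DecidableEq σ] {d : σ →₀ ℕ} {c : R} {q : MvPolynomial σ R}
    (hd : d ∉ q.support) (hc : c ≠ 0) : (monomial d c + q).vars = d.support ∪ q.vars := by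
  ext i
  simp [mem_vars_iff_mem_support, support_monomial_add hd hc]

end MvPolynomial

namespace RTerm

variable {n : ℕ}

local infix:50 " ≐ " => DerivWcr

instance : Trans (@DerivWcr n) (@DerivWcr n) (@DerivWcr n) := ⟨DerivWcr.trans⟩

namespace DerivWcr

theorem zero_add (x : RTerm n) : zero.add x ≐ x := (add_comm _ _).trans (add_zero x)

theorem mul_one (x : RTerm n) : x.mul one ≐ x := (mul_comm _ _).trans (one_mul x)

theorem add_left_comm (x y z : RTerm n) : x.add (y.add z) ≐ y.add (x.add z) :=
  ((add_assoc x y z).symm.trans (add_congr (add_comm x y) (refl z))).trans (add_assoc y x z)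

theorem add_add_add_comm (a b c d : RTerm n) :
    (a.add b).add (c.add d) ≐ (a.add c).add (b.add d) :=
  calc (a.add b).add (c.add d) ≐ a.add (b.add (c.add d)) := add_assoc _ _ _
    _ ≐ a.add (c.add (b.add d)) := add_congr (refl a) (add_left_comm b c d)
    _ ≐ (a.add c).add (b.add d) := (add_assoc a c (b.add d)).symm

theorem mul_left_comm (x y z : RTerm n) : x.mul (y.mul z) ≐ y.mul (x.mul z) :=
  ((mul_assoc x y z).trans (mul_congr (mul_comm x y) (refl z))).trans (mul_assoc y x z).symm

theorem mul_mul_mul_comm (a b c d : RTerm n) :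
    (a.mul b).mul (c.mul d) ≐ (a.mul c).mul (b.mul d) :=
  calc (a.mul b).mul (c.mul d) ≐ a.mul (b.mul (c.mul d)) := (mul_assoc a b (c.mul d)).symm
    _ ≐ a.mul (c.mul (b.mul d)) := mul_congr (refl a) (mul_left_comm b c d)
    _ ≐ (a.mul c).mul (b.mul d) := mul_assoc a c (b.mul d)

theorem add_mul (x y z : RTerm n) : (x.add y).mul z ≐ (x.mul z).add (y.mul z) :=
  (mul_comm _ _).trans ((mul_add z x y).trans (add_congr (mul_comm z x) (mul_comm z y)))

theorem zero_mul_one : (zero.mul one : RTerm n) ≐ zero := (mul_comm _ _).trans (one_mul zero)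

theorem add_zero_mul_self (x : RTerm n) : x.add (zero.mul x) ≐ x :=
  calc x.add (zero.mul x) ≐ (x.mul one).add (x.mul zero) :=
        add_congr (mul_one x).symm (mul_comm zero x)
    _ ≐ x.mul (one.add zero) := (mul_add x one zero).symm
    _ ≐ x.mul one := mul_congr (refl x) (add_zero one)
    _ ≐ x := mul_one x

theorem zero_mul_add_zero_mul (x y : RTerm n) :
    (zero.mul x).add (zero.mul y) ≐ zero.mul (x.mul y) :=
  (mul_add zero x y).symm.trans (zero_mul_add x y)

theorem zero_mul_mul_congr {x x' y y' : RTerm n} (hx : zero.mul x ≐ zero.mul x')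
    (hy : zero.mul y ≐ zero.mul y') : zero.mul (x.mul y) ≐ zero.mul (x'.mul y') :=
  (zero_mul_add_zero_mul x y).symm.trans ((add_congr hx hy).trans (zero_mul_add_zero_mul x' y'))

theorem zero_mul_zero : (zero.mul zero : RTerm n) ≐ zero :=
  (zero_add _).symm.trans (add_zero_mul_self zero)

theorem zero_mul_neg (x : RTerm n) : zero.mul x.neg ≐ zero.mul x :=
  calc zero.mul x.neg ≐ x.neg.add x.neg.neg := (add_neg x.neg).symm
    _ ≐ x.neg.add x := add_congr (refl _) (neg_neg x)
    _ ≐ x.add x.neg := add_comm _ _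
    _ ≐ zero.mul x := add_neg x

theorem zero_mul_mul_self (x : RTerm n) : zero.mul (x.mul x) ≐ zero.mul x :=
  calc zero.mul (x.mul x) ≐ (x.mul zero).add (x.mul zero) :=
        (zero_mul_add_zero_mul x x).symm.trans (add_congr (mul_comm _ _) (mul_comm _ _))
    _ ≐ x.mul (zero.add zero) := (mul_add _ _ _).symm
    _ ≐ zero.mul x := (mul_congr (refl x) (add_zero zero)).trans (mul_comm _ _)

/-- Since `x + (-x)` is only `0·x`, an additive inverse is unique only once its junk part is. -/
theorem neg_of_add_eq_zero_mul {x y : RTerm n} (h : x.add y ≐ zero.mul x)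
    (h' : zero.mul y ≐ zero.mul x) : x.neg ≐ y :=
  calc x.neg ≐ x.neg.add (zero.mul x) :=
        (add_zero_mul_self _).symm.trans (add_congr (refl _) (zero_mul_neg x))
    _ ≐ x.neg.add (x.add y) := add_congr (refl _) h.symm
    _ ≐ (x.add x.neg).add y := (add_assoc _ _ _).symm.trans (add_congr (add_comm _ _) (refl y))
    _ ≐ (zero.mul y).add y := add_congr ((add_neg x).trans h'.symm) (refl y)
    _ ≐ y := (add_comm _ _).trans (add_zero_mul_self y)

theorem neg_zero : (zero.neg : RTerm n) ≐ zero :=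
  neg_of_add_eq_zero_mul ((add_zero zero).trans zero_mul_zero.symm) (refl _)

theorem neg_mul (x y : RTerm n) : (x.mul y).neg ≐ x.neg.mul y := by
  have hjunk : zero.mul (x.neg.mul y) ≐ zero.mul (x.mul y) :=
    (mul_assoc _ _ _).trans ((mul_congr (zero_mul_neg x) (refl y)).trans (mul_assoc _ _ _).symm)
  refine neg_of_add_eq_zero_mul ?_ hjunk
  calc (x.mul y).add (x.neg.mul y) ≐ (x.add x.neg).mul y := (add_mul _ _ _).symm
    _ ≐ (zero.mul x).mul y := mul_congr (add_neg x) (refl y)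
    _ ≐ zero.mul (x.mul y) := (mul_assoc _ _ _).symm

theorem neg_add (x y : RTerm n) : (x.add y).neg ≐ x.neg.add y.neg := by
  have hsplit : zero.mul (x.add y) ≐ (zero.mul x).add (zero.mul y) :=
    (zero_mul_add x y).trans (zero_mul_add_zero_mul x y).symm
  refine neg_of_add_eq_zero_mul ?_ ?_
  · calc (x.add y).add (x.neg.add y.neg) ≐ (x.add x.neg).add (y.add y.neg) :=
          add_add_add_comm _ _ _ _
      _ ≐ zero.mul (x.add y) := (add_congr (add_neg x) (add_neg y)).trans hsplit.symm
  · calc zero.mul (x.neg.add y.neg) ≐ (zero.mul x.neg).add (zero.mul y.neg) := mul_add _ _ _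
      _ ≐ zero.mul (x.add y) :=
          (add_congr (zero_mul_neg x) (zero_mul_neg y)).trans hsplit.symm

theorem zero_mul_bot : (zero.mul bot : RTerm n) ≐ bot :=
  (add_neg bot).symm.trans ((add_comm _ _).trans (add_bot _))

theorem neg_bot : (bot.neg : RTerm n) ≐ bot :=
  neg_of_add_eq_zero_mul ((add_bot bot).trans zero_mul_bot.symm) (refl _)

theorem mul_bot (x : RTerm n) : x.mul bot ≐ bot := by
  have hjunk : zero.mul (x.mul bot) ≐ bot :=
    (zero_mul_add x bot).symm.trans ((mul_congr (refl zero) (add_bot x)).trans zero_mul_bot)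
  exact (add_zero_mul_self _).symm.trans ((add_congr (refl _) hjunk).trans (add_bot _))

theorem bot_mul (x : RTerm n) : bot.mul x ≐ bot := (mul_comm _ _).trans (mul_bot x)

theorem bot_add (x : RTerm n) : bot.add x ≐ bot := (add_comm _ _).trans (add_bot x)

end DerivWcr

def vars : RTerm n → Finset (Fin n)
  | var i => {i}
  | zero | one | bot => ∅
  | neg t => t.vars
  | add t s | mul t s => t.vars ∪ s.vars

def BotFree : RTerm n → Prop
  | bot => False
  | var _ | zero | one => True
  | neg t => t.BotFree
  | add t s | mul t s => t.BotFree ∧ s.BotFree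

theorem DerivWcr.eq_bot_or_botFree : ∀ t : RTerm n, t ≐ bot ∨ t.BotFree
  | var _ | zero | one => Or.inr trivial
  | bot => Or.inl (.refl _)
  | neg t => (eq_bot_or_botFree t).imp_left fun h => (neg_congr h).trans neg_bot
  | add t s => by
    rcases eq_bot_or_botFree t with h | h
    · exact Or.inl ((add_congr h (refl s)).trans (bot_add s))
    rcases eq_bot_or_botFree s with h' | h'
    · exact Or.inl ((add_congr (refl t) h').trans (add_bot t))
    · exact Or.inr ⟨h, h'⟩
  | mul t s => by
    rcases eq_bot_or_botFree t with h | h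
    · exact Or.inl ((mul_congr h (refl s)).trans (bot_mul s))
    rcases eq_bot_or_botFree s with h' | h'
    · exact Or.inl ((mul_congr (refl t) h').trans (mul_bot t))
    · exact Or.inr ⟨h, h'⟩

def listSum (l : List (RTerm n)) : RTerm n := l.foldr add zero

def listProd (l : List (RTerm n)) : RTerm n := l.foldr mul one

theorem mem_vars_listSum {j : Fin n} :
    ∀ {l : List (RTerm n)}, j ∈ (listSum l).vars ↔ ∃ x ∈ l, j ∈ x.vars
  | [] => by simp [listSum, vars]
  | a :: l => by simp [listSum, vars, ← mem_vars_listSum (l := l)]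

theorem mem_vars_listProd {j : Fin n} :
    ∀ {l : List (RTerm n)}, j ∈ (listProd l).vars ↔ ∃ x ∈ l, j ∈ x.vars
  | [] => by simp [listProd, vars]
  | a :: l => by simp [listProd, vars, ← mem_vars_listProd (l := l)]

theorem botFree_listSum : ∀ {l : List (RTerm n)}, (∀ x ∈ l, x.BotFree) → (listSum l).BotFree
  | [], _ => trivial
  | a :: _, h => ⟨h a List.mem_cons_self, botFree_listSum fun x hx => h x (.tail a hx)⟩

theorem botFree_listProd : ∀ {l : List (RTerm n)}, (∀ x ∈ l, x.BotFree) → (listProd l).BotFree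
  | [], _ => trivial
  | a :: _, h => ⟨h a List.mem_cons_self, botFree_listProd fun x hx => h x (.tail a hx)⟩

theorem vars_listProd_map_var (l : List (Fin n)) : (listProd (l.map var)).vars = l.toFinset := by
  ext j
  simp [mem_vars_listProd, vars]

namespace DerivWcr

theorem listSum_perm {l l' : List (RTerm n)} (h : l.Perm l') : listSum l ≐ listSum l' := by
  induction h with
  | nil => exact refl _
  | cons a _ ih => exact add_congr (refl a) ih
  | swap a b _ => exact add_left_comm _ _ _
  | trans _ _ ih₁ ih₂ => exact ih₁.trans ih₂

theorem listProd_perm {l l' : List (RTerm n)} (h : l.Perm l') : listProd l ≐ listProd l' := by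
  induction h with
  | nil => exact refl _
  | cons a _ ih => exact mul_congr (refl a) ih
  | swap a b _ => exact mul_left_comm _ _ _
  | trans _ _ ih₁ ih₂ => exact ih₁.trans ih₂

theorem listProd_append :
    ∀ l l' : List (RTerm n), listProd (l ++ l') ≐ (listProd l).mul (listProd l')
  | [], _ => (one_mul _).symm
  | a :: l, l' => (mul_congr (refl a) (listProd_append l l')).trans (mul_assoc _ _ _)

theorem prodList_eq_listProd : ∀ l : List (RTerm n), prodList l ≐ listProd l
  | [] => refl one
  | [t] => (mul_one t).symm
  | t :: s :: l => mul_congr (refl t) (prodList_eq_listProd (s :: l))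

theorem listProd_map_mul_listProd_map {ι : Type} {f g h : ι → RTerm n}
    (hfg : ∀ i, (f i).mul (g i) ≐ h i) :
    ∀ l : List ι, (listProd (l.map f)).mul (listProd (l.map g)) ≐ listProd (l.map h)
  | [] => one_mul one
  | a :: l => (mul_mul_mul_comm _ _ _ _).trans
      (mul_congr (hfg a) (listProd_map_mul_listProd_map hfg l))

theorem listProd_map_eq_one {ι : Type} {f : ι → RTerm n} :
    ∀ {l : List ι}, (∀ i ∈ l, f i ≐ one) → listProd (l.map f) ≐ one
  | [], _ => refl one
  | a :: _, h => (mul_congr (h a List.mem_cons_self)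
      (listProd_map_eq_one fun i hi => h i (.tail a hi))).trans (one_mul one)

theorem listProd_map_eq_of_nodup {ι : Type} {f : ι → RTerm n} {x : RTerm n} {i : ι}
    (hi : f i ≐ x) : ∀ {l : List ι}, l.Nodup → i ∈ l → (∀ j ∈ l, j ≠ i → f j ≐ one) →
      listProd (l.map f) ≐ x
  | a :: l, hl, hil, hone => by
    rw [List.nodup_cons] at hl
    rcases List.mem_cons.mp hil with rfl | hil
    · refine (mul_congr hi (listProd_map_eq_one fun j hj => ?_)).trans (mul_one x)
      exact hone j (.tail _ hj) fun hji => hl.1 (hji ▸ hj)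
    · refine (mul_congr (hone a List.mem_cons_self ?_) ?_).trans (one_mul x)
      · exact fun hai => hl.1 (hai ▸ hil)
      · exact listProd_map_eq_of_nodup hi hl.2 hil fun j hj => hone j (.tail a hj)

end DerivWcr

def zeroProd (S : Finset (Fin n)) : RTerm n := zero.mul (listProd ((S.sort (· ≤ ·)).map var))

theorem vars_zeroProd (S : Finset (Fin n)) : (zeroProd S).vars = S := by
  simp [zeroProd, vars, vars_listProd_map_var]

theorem botFree_zeroProd (S : Finset (Fin n)) : (zeroProd S).BotFree :=
  ⟨trivial, botFree_listProd fun x hx => by obtain ⟨i, -, rfl⟩ := List.mem_map.mp hx; trivial⟩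

namespace DerivWcr

theorem zero_mul_var_mul_listProd_of_mem {a : Fin n} : ∀ {l : List (Fin n)}, a ∈ l →
    zero.mul ((var a).mul (listProd (l.map var))) ≐ zero.mul (listProd (l.map var))
  | b :: l, h => by
    rcases List.mem_cons.mp h with rfl | h
    · exact (mul_congr (refl zero) (mul_assoc _ _ _)).trans
        (zero_mul_mul_congr (zero_mul_mul_self _) (refl _))
    · exact (mul_congr (refl zero) (mul_left_comm _ _ _)).trans
        (zero_mul_mul_congr (refl _) (zero_mul_var_mul_listProd_of_mem h))

theorem zero_mul_listProd_dedup : ∀ l : List (Fin n),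
    zero.mul (listProd (l.map var)) ≐ zero.mul (listProd (l.dedup.map var))
  | [] => refl _
  | a :: l => by
    by_cases h : a ∈ l
    · rw [List.dedup_cons_of_mem h]
      exact (zero_mul_var_mul_listProd_of_mem h).trans (zero_mul_listProd_dedup l)
    · rw [List.dedup_cons_of_notMem h]
      exact zero_mul_mul_congr (refl _) (zero_mul_listProd_dedup l)

theorem zero_mul_listProd_eq_zeroProd {l : List (Fin n)} {S : Finset (Fin n)}
    (h : l.toFinset = S) : zero.mul (listProd (l.map var)) ≐ zeroProd S := by
  have hperm : l.dedup.Perm (S.sort (· ≤ ·)).dedup := by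
    apply List.perm_of_nodup_nodup_toFinset_eq (List.nodup_dedup _) (List.nodup_dedup _)
    ext
    simp [← h]
  exact (zero_mul_listProd_dedup l).trans ((mul_congr (refl zero) (listProd_perm
    (hperm.map var))).trans (zero_mul_listProd_dedup _).symm)

theorem zeroProd_add_zeroProd (A B : Finset (Fin n)) :
    (zeroProd A).add (zeroProd B) ≐ zeroProd (A ∪ B) := by
  refine (zero_mul_add_zero_mul _ _).trans ?_
  refine (mul_congr (refl zero) (listProd_append _ _).symm).trans ?_
  rw [← List.map_append]
  exact zero_mul_listProd_eq_zeroProd (by simp)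

theorem zeroProd_empty : (zeroProd ∅ : RTerm n) ≐ zero := by
  rw [zeroProd, Finset.sort_empty]
  exact zero_mul_one

theorem neg_zeroProd (S : Finset (Fin n)) : (zeroProd S).neg ≐ zeroProd S :=
  (neg_mul zero _).trans (mul_congr neg_zero (refl _))

theorem zero_mul_eq_zeroProd : ∀ {w : RTerm n}, w.BotFree → zero.mul w ≐ zeroProd w.vars
  | var i, _ => (mul_congr (refl zero) (mul_one (var i)).symm).trans
      (zero_mul_listProd_eq_zeroProd (l := [i]) rfl)
  | zero, _ => zero_mul_zero.trans
      (zero_mul_one.symm.trans (zero_mul_listProd_eq_zeroProd (l := []) rfl))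
  | one, _ => zero_mul_listProd_eq_zeroProd (l := []) rfl
  | neg _, h => (zero_mul_neg _).trans (zero_mul_eq_zeroProd h)
  | add t s, h => (zero_mul_add t s).trans ((zero_mul_add_zero_mul t s).symm.trans
      ((add_congr (zero_mul_eq_zeroProd h.1) (zero_mul_eq_zeroProd h.2)).trans
        (zeroProd_add_zeroProd _ _)))
  | mul t s, h => (zero_mul_add_zero_mul t s).symm.trans
      ((add_congr (zero_mul_eq_zeroProd h.1) (zero_mul_eq_zeroProd h.2)).trans
        (zeroProd_add_zeroProd _ _))

theorem add_zeroProd_vars {x : RTerm n} (hx : x.BotFree) : x.add (zeroProd x.vars) ≐ x :=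
  (add_congr (refl x) (zero_mul_eq_zeroProd hx).symm).trans (add_zero_mul_self x)

theorem add_zeroProd_vars_union {x : RTerm n} (hx : x.BotFree) (W : Finset (Fin n)) :
    x.add (zeroProd (x.vars ∪ W)) ≐ x.add (zeroProd W) :=
  calc x.add (zeroProd (x.vars ∪ W)) ≐ x.add ((zeroProd x.vars).add (zeroProd W)) :=
        add_congr (refl x) (zeroProd_add_zeroProd _ _).symm
    _ ≐ x.add (zeroProd W) :=
        (add_assoc _ _ _).symm.trans (add_congr (add_zeroProd_vars hx) (refl _))

end DerivWcr

/-- On ring terms with variables in `V` this is a congruence satisfying all the commutative ring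
laws, `0·x = 0` included: the setting in which polynomial arithmetic is carried out. -/
def DerivMod (V : Finset (Fin n)) (t s : RTerm n) : Prop := t.add (zeroProd V) ≐ s.add (zeroProd V)

local notation:50 t:51 " ≐[" V "] " s:51 => DerivMod V t s

namespace DerivMod

variable {V : Finset (Fin n)} {t t' s s' : RTerm n}

theorem of_derivWcr (h : t ≐ s) : t ≐[V] s := DerivWcr.add_congr h (.refl _)

@[refl] theorem refl (t : RTerm n) : t ≐[V] t := DerivWcr.refl _

@[symm] theorem symm (h : t ≐[V] s) : s ≐[V] t := DerivWcr.symm h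

theorem trans {u : RTerm n} (h : t ≐[V] s) (h' : s ≐[V] u) : t ≐[V] u := DerivWcr.trans h h'

instance : Trans (DerivMod V) (DerivMod V) (DerivMod V) := ⟨trans⟩

instance : Trans (@DerivWcr n) (DerivMod V) (DerivMod V) := ⟨fun h => (of_derivWcr h).trans⟩

instance : Trans (DerivMod V) (@DerivWcr n) (DerivMod V) := ⟨fun h h' => h.trans (of_derivWcr h')⟩

theorem add_zeroProd_add (t s : RTerm n) :
    (t.add s).add (zeroProd V) ≐ (t.add (zeroProd V)).add (s.add (zeroProd V)) := by
  have hidem : (zeroProd V).add (zeroProd V) ≐ zeroProd V := by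
    simpa using DerivWcr.zeroProd_add_zeroProd V V
  exact (DerivWcr.add_congr (.refl _) hidem.symm).trans (DerivWcr.add_add_add_comm _ _ _ _)

theorem add (ht : t ≐[V] t') (hs : s ≐[V] s') : t.add s ≐[V] t'.add s' :=
  (add_zeroProd_add t s).trans ((DerivWcr.add_congr ht hs).trans (add_zeroProd_add t' s').symm)

theorem neg (h : t ≐[V] s) : t.neg ≐[V] s.neg := by
  have hneg : ∀ x : RTerm n, x.neg.add (zeroProd V) ≐ (x.add (zeroProd V)).neg := fun x =>
    (DerivWcr.add_congr (.refl _) (DerivWcr.neg_zeroProd V).symm).trans (DerivWcr.neg_add _ _).symm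
  exact (hneg t).trans ((DerivWcr.neg_congr h).trans (hneg s).symm)

theorem zero_mul {x : RTerm n} (hx : x.BotFree) (hxV : x.vars ⊆ V) : zero.mul x ≐[V] zero :=
  calc (zero.mul x).add (zeroProd V) ≐ (zeroProd x.vars).add (zeroProd V) :=
        DerivWcr.add_congr (DerivWcr.zero_mul_eq_zeroProd hx) (.refl _)
    _ ≐ zeroProd V := by simpa [Finset.union_eq_right.mpr hxV] using
        DerivWcr.zeroProd_add_zeroProd x.vars V
    _ ≐ zero.add (zeroProd V) := (DerivWcr.zero_add _).symm

theorem zeroProd_mul {y : RTerm n} (hy : y.BotFree) (hyV : y.vars ⊆ V) :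
    (zeroProd V).mul y ≐[V] zero :=
  calc (zeroProd V).mul y ≐ zero.mul ((listProd ((V.sort (· ≤ ·)).map var)).mul y) :=
        (DerivWcr.mul_assoc _ _ _).symm
    _ ≐[V] zero := zero_mul ⟨(botFree_zeroProd V).2, hy⟩ (Finset.union_subset
        (by simp [vars_listProd_map_var]) hyV)

theorem mul_add_zeroProd {x y : RTerm n} (hx : x.BotFree) (hxV : x.vars ⊆ V) (hy : y.BotFree)
    (hyV : y.vars ⊆ V) : x.mul y ≐[V] (x.add (zeroProd V)).mul (y.add (zeroProd V)) := by
  have hzz := zeroProd_mul (botFree_zeroProd V) (vars_zeroProd V).subset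
  have hxz : x.mul (zeroProd V) ≐[V] zero := (of_derivWcr (DerivWcr.mul_comm _ _)).trans
    (zeroProd_mul hx hxV)
  symm
  calc (x.add (zeroProd V)).mul (y.add (zeroProd V))
      ≐ ((x.mul y).add ((zeroProd V).mul y)).add
          ((x.mul (zeroProd V)).add ((zeroProd V).mul (zeroProd V))) :=
        (DerivWcr.mul_add _ _ _).trans
          (DerivWcr.add_congr (DerivWcr.add_mul _ _ _) (DerivWcr.add_mul _ _ _))
    _ ≐[V] ((x.mul y).add zero).add (zero.add zero) :=
        ((refl _).add (zeroProd_mul hy hyV)).add (hxz.add hzz)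
    _ ≐ x.mul y := (DerivWcr.add_congr (DerivWcr.add_zero _) (DerivWcr.add_zero _)).trans
        (DerivWcr.add_zero _)

end DerivMod

theorem vars_natNumeral : ∀ k : ℕ, (natNumeral n k).vars = ∅
  | 0 | 1 => rfl
  | k + 2 => by simp [natNumeral, vars, vars_natNumeral (k + 1)]

theorem botFree_natNumeral : ∀ k : ℕ, (natNumeral n k).BotFree
  | 0 | 1 => trivial
  | k + 2 => ⟨botFree_natNumeral (k + 1), trivial⟩

theorem vars_intNumeral (c : ℤ) : (intNumeral n c).vars = ∅ := by
  unfold intNumeral; split <;> exact vars_natNumeral _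

theorem botFree_intNumeral (c : ℤ) : (intNumeral n c).BotFree := by
  unfold intNumeral; split <;> exact botFree_natNumeral _

theorem intNumeral_zero : intNumeral n 0 = zero := rfl

theorem intNumeral_natCast (k : ℕ) : intNumeral n k = natNumeral n k := by
  rw [intNumeral, if_pos (Int.natCast_nonneg k), Int.toNat_natCast]

namespace DerivWcr

theorem natNumeral_succ : ∀ k : ℕ, natNumeral n (k + 1) ≐ (natNumeral n k).add one
  | 0 => (zero_add one).symm
  | _ + 1 => refl _

theorem intNumeral_neg (c : ℤ) : intNumeral n (-c) ≐ (intNumeral n c).neg := by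
  rcases lt_trichotomy c 0 with h | rfl | h
  · rw [intNumeral, if_pos (by omega), intNumeral, if_neg (by omega)]
    exact (neg_neg _).symm
  · exact neg_zero.symm
  · rw [intNumeral, if_neg (by omega), intNumeral, if_pos (by omega), _root_.neg_neg]
    exact refl _

theorem intNumeral_add_one (a : ℤ) : intNumeral n (a + 1) ≐ (intNumeral n a).add one := by
  obtain ⟨k, rfl | rfl⟩ := a.eq_nat_or_neg
  · exact_mod_cast natNumeral_succ k
  · rcases k with _ | k
    · exact (zero_add one).symm
    have hk : -((k + 1 : ℕ) : ℤ) + 1 = -(k : ℤ) := by omega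
    have hnat : ∀ m : ℕ, intNumeral n (-(m : ℤ)) ≐ (natNumeral n m).neg := fun m => by
      simpa [intNumeral_natCast] using intNumeral_neg (n := n) (m : ℤ)
    have hcancel : one.neg.add one ≐ (zero : RTerm n) :=
      (add_comm _ _).trans ((add_neg one).trans zero_mul_one)
    rw [hk]
    calc intNumeral n (-(k : ℤ)) ≐ (natNumeral n k).neg.add (one.neg.add one) :=
          (hnat k).trans ((add_zero _).symm.trans (add_congr (refl _) hcancel.symm))
      _ ≐ ((natNumeral n k).add one).neg.add one :=
          (add_assoc _ _ _).symm.trans (add_congr (neg_add _ _).symm (refl one))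
      _ ≐ (intNumeral n (-((k + 1 : ℕ) : ℤ))).add one :=
          add_congr ((neg_congr (natNumeral_succ k)).symm.trans (hnat _).symm) (refl one)

theorem intNumeral_sub_one (a : ℤ) : intNumeral n (a - 1) ≐ (intNumeral n a).add one.neg :=
  calc intNumeral n (a - 1) ≐ (intNumeral n (a - 1)).add (one.add one.neg) :=
        (add_zero _).symm.trans (add_congr (refl _) (zero_mul_one.symm.trans (add_neg one).symm))
    _ ≐ (intNumeral n (a - 1 + 1)).add one.neg :=
        (add_assoc _ _ _).symm.trans (add_congr (intNumeral_add_one _).symm (refl _))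
    _ = (intNumeral n a).add one.neg := by rw [sub_add_cancel]

theorem intNumeral_add (a b : ℤ) :
    (intNumeral n a).add (intNumeral n b) ≐ intNumeral n (a + b) := by
  induction b using Int.induction_on with
  | zero => simpa [intNumeral_zero] using add_zero (intNumeral n a)
  | succ b ih =>
    calc (intNumeral n a).add (intNumeral n (b + 1))
        ≐ ((intNumeral n a).add (intNumeral n b)).add one :=
          (add_congr (refl _) (intNumeral_add_one b)).trans (add_assoc _ _ _).symm
      _ ≐ intNumeral n (a + (b + 1)) := by
          rw [← _root_.add_assoc]; exact (add_congr ih (refl one)).trans (intNumeral_add_one _).symm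
  | pred b ih =>
    calc (intNumeral n a).add (intNumeral n (-b - 1))
        ≐ ((intNumeral n a).add (intNumeral n (-b))).add one.neg :=
          (add_congr (refl _) (intNumeral_sub_one _)).trans (add_assoc _ _ _).symm
      _ ≐ intNumeral n (a + (-b - 1)) := by
          rw [← add_sub_assoc]; exact (add_congr ih (refl _)).trans (intNumeral_sub_one _).symm

theorem zero_mul_intNumeral (a : ℤ) : zero.mul (intNumeral n a) ≐ zero :=
  calc zero.mul (intNumeral n a) ≐ (intNumeral n a).add (intNumeral n (-a)) :=
        (add_neg _).symm.trans (add_congr (refl _) (intNumeral_neg a).symm)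
    _ ≐ zero := by simpa [intNumeral_zero] using intNumeral_add (n := n) a (-a)

theorem intNumeral_mul (a b : ℤ) :
    (intNumeral n a).mul (intNumeral n b) ≐ intNumeral n (a * b) := by
  induction b using Int.induction_on with
  | zero => simpa [intNumeral_zero] using (mul_comm _ _).trans (zero_mul_intNumeral (n := n) a)
  | succ b ih =>
    calc (intNumeral n a).mul (intNumeral n (b + 1))
        ≐ ((intNumeral n a).mul (intNumeral n b)).add ((intNumeral n a).mul one) :=
          (mul_congr (refl _) (intNumeral_add_one b)).trans (mul_add _ _ _)
      _ ≐ intNumeral n (a * (b + 1)) := by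
          rw [_root_.mul_add, _root_.mul_one]
          exact (add_congr ih (mul_one _)).trans (intNumeral_add _ _)
  | pred b ih =>
    have hneg : (intNumeral n a).mul one.neg ≐ intNumeral n (-a) :=
      (mul_comm _ _).trans ((neg_mul _ _).symm.trans
        ((neg_congr (one_mul _)).trans (intNumeral_neg a).symm))
    calc (intNumeral n a).mul (intNumeral n (-b - 1))
        ≐ ((intNumeral n a).mul (intNumeral n (-b))).add ((intNumeral n a).mul one.neg) :=
          (mul_congr (refl _) (intNumeral_sub_one _)).trans (mul_add _ _ _)
      _ ≐ intNumeral n (a * (-b - 1)) := by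
          rw [_root_.mul_sub, _root_.mul_one, sub_eq_add_neg]
          exact (add_congr ih hneg).trans (intNumeral_add _ _)

end DerivWcr

theorem vars_pow (x : RTerm n) : ∀ k : ℕ, (x.pow k).vars = if k = 0 then ∅ else x.vars
  | 0 | 1 => rfl
  | k + 2 => by simp [pow, vars, vars_pow x (k + 1)]

theorem botFree_pow {x : RTerm n} (hx : x.BotFree) : ∀ k : ℕ, (x.pow k).BotFree
  | 0 => trivial
  | 1 => hx
  | k + 2 => ⟨botFree_pow hx (k + 1), hx⟩

theorem vars_monTerm (d : Fin n →₀ ℕ) : (monTerm d).vars = d.support := by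
  ext j
  change j ∈ (listProd _).vars ↔ _
  rw [mem_vars_listProd]
  constructor
  · rintro ⟨_, hx, hj⟩
    obtain ⟨i, -, rfl⟩ := List.mem_map.mp hx
    rw [vars_pow] at hj
    split_ifs at hj with h
    · simp at hj
    · obtain rfl : j = i := Finset.mem_singleton.mp hj
      exact Finsupp.mem_support_iff.mpr h
  · intro hj
    refine ⟨_, List.mem_map_of_mem (List.mem_finRange j), ?_⟩
    rw [vars_pow, if_neg (Finsupp.mem_support_iff.mp hj)]
    exact Finset.mem_singleton_self j

theorem botFree_monTerm (d : Fin n →₀ ℕ) : (monTerm d).BotFree :=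
  botFree_listProd fun x hx => by
    obtain ⟨i, -, rfl⟩ := List.mem_map.mp hx
    exact botFree_pow (x := var i) trivial _

namespace DerivWcr

theorem pow_succ (x : RTerm n) : ∀ k : ℕ, x.pow (k + 1) ≐ (x.pow k).mul x
  | 0 => (one_mul x).symm
  | _ + 1 => refl _

theorem pow_add (x : RTerm n) (a : ℕ) : ∀ b : ℕ, (x.pow a).mul (x.pow b) ≐ x.pow (a + b)
  | 0 => mul_one _
  | b + 1 =>
    calc (x.pow a).mul (x.pow (b + 1)) ≐ ((x.pow a).mul (x.pow b)).mul x :=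
          (mul_congr (refl _) (pow_succ x b)).trans (mul_assoc _ _ _)
      _ ≐ x.pow (a + b + 1) := (mul_congr (pow_add x a b) (refl x)).trans (pow_succ x _).symm

theorem monTerm_mul (d e : Fin n →₀ ℕ) : (monTerm d).mul (monTerm e) ≐ monTerm (d + e) :=
  listProd_map_mul_listProd_map (fun i => pow_add (var i) (d i) (e i)) _

theorem monTerm_zero : monTerm (0 : Fin n →₀ ℕ) ≐ one :=
  listProd_map_eq_one fun _ _ => refl one

theorem monTerm_single (i : Fin n) : monTerm (Finsupp.single i 1) ≐ var i := by
  refine listProd_map_eq_of_nodup ?_ (List.nodup_finRange n) (List.mem_finRange i) fun j _ hji => ?_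
  · simpa [pow] using refl (var i)
  · simpa [Finsupp.single_eq_of_ne hji, pow] using refl (one : RTerm n)

end DerivWcr

def monomialTerm (c : ℤ) (d : Fin n →₀ ℕ) : RTerm n := (intNumeral n c).mul (monTerm d)

theorem vars_monomialTerm (c : ℤ) (d : Fin n →₀ ℕ) : (monomialTerm c d).vars = d.support := by
  simp [monomialTerm, vars, vars_intNumeral, vars_monTerm]

theorem botFree_monomialTerm (c : ℤ) (d : Fin n →₀ ℕ) : (monomialTerm c d).BotFree :=
  ⟨botFree_intNumeral c, botFree_monTerm d⟩

namespace DerivWcr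

theorem monomialTerm_add_monomialTerm (c b : ℤ) (d : Fin n →₀ ℕ) :
    (monomialTerm c d).add (monomialTerm b d) ≐ monomialTerm (c + b) d :=
  calc (monomialTerm c d).add (monomialTerm b d)
      ≐ ((intNumeral n c).add (intNumeral n b)).mul (monTerm d) := (add_mul _ _ _).symm
    _ ≐ monomialTerm (c + b) d := mul_congr (intNumeral_add c b) (refl _)

theorem monomialTerm_mul_monomialTerm (c c' : ℤ) (d d' : Fin n →₀ ℕ) :
    (monomialTerm c d).mul (monomialTerm c' d') ≐ monomialTerm (c * c') (d + d') :=
  (mul_mul_mul_comm _ _ _ _).trans (mul_congr (intNumeral_mul c c') (monTerm_mul d d'))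

theorem neg_monomialTerm (c : ℤ) (d : Fin n →₀ ℕ) :
    (monomialTerm c d).neg ≐ monomialTerm (-c) d :=
  (neg_mul _ _).trans (mul_congr (intNumeral_neg c).symm (refl _))

theorem monomialTerm_one (d : Fin n →₀ ℕ) : monomialTerm 1 d ≐ monTerm d := one_mul _

end DerivWcr

open MvPolynomial

theorem polyTerm_eq_listSum (α : MvPolynomial (Fin n) ℤ) :
    polyTerm α = listSum (α.support.toList.map fun d => monomialTerm (α.coeff d) d) := rfl

theorem polyTerm_zero : polyTerm (0 : MvPolynomial (Fin n) ℤ) = zero := by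
  simp [polyTerm_eq_listSum, listSum]

theorem vars_polyTerm (α : MvPolynomial (Fin n) ℤ) : (polyTerm α).vars = α.vars := by
  ext j
  simp [polyTerm_eq_listSum, mem_vars_listSum, vars_monomialTerm, mem_vars_iff_mem_support]

theorem botFree_polyTerm (α : MvPolynomial (Fin n) ℤ) : (polyTerm α).BotFree := by
  refine botFree_listSum fun x hx => ?_
  obtain ⟨d, -, rfl⟩ := List.mem_map.mp hx
  exact botFree_monomialTerm _ _

namespace DerivWcr

theorem polyTerm_monomial_add {d : Fin n →₀ ℕ} {c : ℤ} {β : MvPolynomial (Fin n) ℤ}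
    (hd : d ∉ β.support) (hc : c ≠ 0) :
    polyTerm (monomial d c + β) ≐ (monomialTerm c d).add (polyTerm β) := by
  have hcoeff : ∀ e ∈ β.support, (monomial d c + β).coeff e = β.coeff e := fun e he => by
    rw [coeff_add, coeff_monomial, if_neg (ne_of_mem_of_not_mem he hd).symm, _root_.zero_add]
  have hcd : (monomial d c + β).coeff d = c := by simpa using notMem_support_iff.mp hd
  rw [polyTerm_eq_listSum, support_monomial_add hd hc]
  refine (listSum_perm ((Finset.toList_insert hd).map _)).trans ?_
  rw [List.map_cons, hcd,
    List.map_congr_left fun e he => by rw [hcoeff e (Finset.mem_toList.mp he)]]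
  exact refl _

theorem polyTerm_monomial {d : Fin n →₀ ℕ} {c : ℤ} (hc : c ≠ 0) :
    polyTerm (monomial d c) ≐ monomialTerm c d := by
  simpa [polyTerm_zero] using (polyTerm_monomial_add (β := 0) (d := d) (by simp) hc).trans
    (by rw [polyTerm_zero]; exact add_zero _)

theorem polyTerm_X (i : Fin n) : polyTerm (X i : MvPolynomial (Fin n) ℤ) ≐ var i :=
  (polyTerm_monomial one_ne_zero).trans ((monomialTerm_one _).trans (monTerm_single i))

theorem polyTerm_one : polyTerm (1 : MvPolynomial (Fin n) ℤ) ≐ one :=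
  (polyTerm_monomial one_ne_zero).trans ((monomialTerm_one _).trans monTerm_zero)

theorem neg_polyTerm (α : MvPolynomial (Fin n) ℤ) : (polyTerm α).neg ≐ polyTerm (-α) := by
  induction α using induction_on_monomial_add with
  | zero => simpa [polyTerm_zero] using neg_zero
  | monomial_add d c α hd hc ih =>
    have hd' : d ∉ (-α).support := by rwa [support_neg]
    calc (polyTerm (monomial d c + α)).neg ≐ (monomialTerm c d).neg.add (polyTerm α).neg :=
          (neg_congr (polyTerm_monomial_add hd hc)).trans (neg_add _ _)
      _ ≐ polyTerm (monomial d (-c) + -α) := (add_congr (neg_monomialTerm c d) ih).trans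
          (polyTerm_monomial_add hd' (neg_ne_zero.mpr hc)).symm
      _ = polyTerm (-(monomial d c + α)) := by rw [_root_.neg_add, map_neg]

end DerivWcr

namespace DerivMod

variable {V : Finset (Fin n)}

theorem monomialTerm_add_polyTerm_of_notMem {d : Fin n →₀ ℕ} (hdV : d.support ⊆ V) (c : ℤ)
    {β : MvPolynomial (Fin n) ℤ} (hd : d ∉ β.support) :
    (monomialTerm c d).add (polyTerm β) ≐[V] polyTerm (monomial d c + β) := by
  rcases eq_or_ne c 0 with rfl | hc
  · have hjunk : monomialTerm 0 d ≐[V] zero :=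
      zero_mul (botFree_monTerm d) ((vars_monTerm d).trans_subset hdV)
    rw [map_zero, _root_.zero_add]
    exact (hjunk.add (refl _)).trans (of_derivWcr (DerivWcr.zero_add _))
  · exact of_derivWcr (DerivWcr.polyTerm_monomial_add hd hc).symm

theorem monomialTerm_add_polyTerm {d : Fin n →₀ ℕ} (hdV : d.support ⊆ V) (c : ℤ)
    (β : MvPolynomial (Fin n) ℤ) :
    (monomialTerm c d).add (polyTerm β) ≐[V] polyTerm (monomial d c + β) := by
  by_cases hd : d ∈ β.support
  · obtain ⟨b, β', hdβ', rfl⟩ : ∃ b β', d ∉ β'.support ∧ β = monomial d b + β' :=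
      ⟨β.coeff d, β - monomial d (β.coeff d), by simp [mem_support_iff], by ring⟩
    have hb : b ≠ 0 := by simpa [mem_support_iff, notMem_support_iff.mp hdβ'] using hd
    calc (monomialTerm c d).add (polyTerm (monomial d b + β'))
        ≐ ((monomialTerm c d).add (monomialTerm b d)).add (polyTerm β') :=
          (DerivWcr.add_congr (.refl _) (DerivWcr.polyTerm_monomial_add hdβ' hb)).trans
            (DerivWcr.add_assoc _ _ _).symm
      _ ≐ (monomialTerm (c + b) d).add (polyTerm β') :=
          DerivWcr.add_congr (DerivWcr.monomialTerm_add_monomialTerm c b d) (.refl _)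
      _ ≐[V] polyTerm (monomial d (c + b) + β') :=
          monomialTerm_add_polyTerm_of_notMem hdV _ hdβ'
      _ = polyTerm (monomial d c + (monomial d b + β')) := by rw [map_add, _root_.add_assoc]
  · exact monomialTerm_add_polyTerm_of_notMem hdV c hd

theorem polyTerm_add_polyTerm {α : MvPolynomial (Fin n) ℤ} (hα : α.vars ⊆ V)
    (β : MvPolynomial (Fin n) ℤ) : (polyTerm α).add (polyTerm β) ≐[V] polyTerm (α + β) := by
  induction α using induction_on_monomial_add with
  | zero => simpa [polyTerm_zero] using of_derivWcr (DerivWcr.zero_add _)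
  | monomial_add d c α hd hc ih =>
    rw [vars_monomial_add hd hc, Finset.union_subset_iff] at hα
    calc (polyTerm (monomial d c + α)).add (polyTerm β)
        ≐ (monomialTerm c d).add ((polyTerm α).add (polyTerm β)) :=
          (DerivWcr.add_congr (DerivWcr.polyTerm_monomial_add hd hc) (.refl _)).trans
            (DerivWcr.add_assoc _ _ _)
      _ ≐[V] (monomialTerm c d).add (polyTerm (α + β)) := (refl _).add (ih hα.2)
      _ ≐[V] polyTerm (monomial d c + α + β) := by
          rw [_root_.add_assoc]; exact monomialTerm_add_polyTerm hα.1 c _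

theorem monomialTerm_mul_polyTerm {d : Fin n →₀ ℕ} (hdV : d.support ⊆ V) (c : ℤ)
    {β : MvPolynomial (Fin n) ℤ} (hβ : β.vars ⊆ V) :
    (monomialTerm c d).mul (polyTerm β) ≐[V] polyTerm (monomial d c * β) := by
  induction β using induction_on_monomial_add with
  | zero =>
    rw [polyTerm_zero, mul_zero, polyTerm_zero]
    exact (of_derivWcr (DerivWcr.mul_comm _ _)).trans (zero_mul (botFree_monomialTerm c d)
      ((vars_monomialTerm c d).trans_subset hdV))
  | monomial_add e c' β he hc' ih =>
    rw [vars_monomial_add he hc', Finset.union_subset_iff] at hβ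
    calc (monomialTerm c d).mul (polyTerm (monomial e c' + β))
        ≐ ((monomialTerm c d).mul (monomialTerm c' e)).add ((monomialTerm c d).mul (polyTerm β)) :=
          (DerivWcr.mul_congr (.refl _) (DerivWcr.polyTerm_monomial_add he hc')).trans
            (DerivWcr.mul_add _ _ _)
      _ ≐[V] (monomialTerm (c * c') (d + e)).add (polyTerm (monomial d c * β)) :=
          (of_derivWcr (DerivWcr.monomialTerm_mul_monomialTerm c c' d e)).add (ih hβ.2)
      _ ≐[V] polyTerm (monomial (d + e) (c * c') + monomial d c * β) :=
          monomialTerm_add_polyTerm (Finsupp.support_add.trans (Finset.union_subset hdV hβ.1)) _ _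
      _ = polyTerm (monomial d c * (monomial e c' + β)) := by rw [_root_.mul_add, monomial_mul]

theorem polyTerm_mul_polyTerm {α β : MvPolynomial (Fin n) ℤ} (hα : α.vars ⊆ V)
    (hβ : β.vars ⊆ V) : (polyTerm α).mul (polyTerm β) ≐[V] polyTerm (α * β) := by
  induction α using induction_on_monomial_add with
  | zero =>
    rw [polyTerm_zero, MulZeroClass.zero_mul, polyTerm_zero]
    exact zero_mul (botFree_polyTerm β) ((vars_polyTerm β).trans_subset hβ)
  | monomial_add d c α hd hc ih =>
    rw [vars_monomial_add hd hc, Finset.union_subset_iff] at hα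
    have hdβ : (monomial d c * β).vars ⊆ V :=
      (vars_mul _ _).trans (Finset.union_subset ((vars_monomial hc).trans_subset hα.1) hβ)
    calc (polyTerm (monomial d c + α)).mul (polyTerm β)
        ≐ ((monomialTerm c d).mul (polyTerm β)).add ((polyTerm α).mul (polyTerm β)) :=
          (DerivWcr.mul_congr (DerivWcr.polyTerm_monomial_add hd hc) (.refl _)).trans
            (DerivWcr.add_mul _ _ _)
      _ ≐[V] (polyTerm (monomial d c * β)).add (polyTerm (α * β)) :=
          (monomialTerm_mul_polyTerm hα.1 c hβ).add (ih hα.2)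
      _ ≐[V] polyTerm ((monomial d c + α) * β) := by
          rw [_root_.add_mul]; exact polyTerm_add_polyTerm hdβ _

end DerivMod

theorem exists_derivMod_polyTerm {V : Finset (Fin n)} : ∀ {t : RTerm n}, t.BotFree → t.vars ⊆ V →
    ∃ α : MvPolynomial (Fin n) ℤ, α.vars ⊆ V ∧ t ≐[V] polyTerm α
  | var i, _, hV => ⟨X i, by rwa [vars_X], DerivMod.of_derivWcr (DerivWcr.polyTerm_X i).symm⟩
  | zero, _, _ => ⟨0, by simp, by rw [polyTerm_zero]⟩
  | one, _, _ => ⟨1, by simp, DerivMod.of_derivWcr DerivWcr.polyTerm_one.symm⟩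
  | neg t, ht, hV => by
    obtain ⟨α, hα, h⟩ := exists_derivMod_polyTerm (t := t) ht hV
    exact ⟨-α, by rwa [vars_neg], h.neg.trans (DerivMod.of_derivWcr (DerivWcr.neg_polyTerm α))⟩
  | add t s, ⟨ht, hs⟩, hV => by
    rw [vars, Finset.union_subset_iff] at hV
    obtain ⟨α, hα, h⟩ := exists_derivMod_polyTerm ht hV.1
    obtain ⟨β, hβ, h'⟩ := exists_derivMod_polyTerm hs hV.2
    exact ⟨α + β, (vars_add_subset α β).trans (Finset.union_subset hα hβ),
      (h.add h').trans (DerivMod.polyTerm_add_polyTerm hα β)⟩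
  | mul t s, ⟨ht, hs⟩, hV => by
    rw [vars, Finset.union_subset_iff] at hV
    obtain ⟨α, hα, h⟩ := exists_derivMod_polyTerm ht hV.1
    obtain ⟨β, hβ, h'⟩ := exists_derivMod_polyTerm hs hV.2
    have hαV := (vars_polyTerm α).trans_subset hα
    have hβV := (vars_polyTerm β).trans_subset hβ
    refine ⟨α * β, (vars_mul α β).trans (Finset.union_subset hα hβ), ?_⟩
    calc t.mul s ≐[V] (t.add (zeroProd V)).mul (s.add (zeroProd V)) :=
          DerivMod.mul_add_zeroProd ht hV.1 hs hV.2
      _ ≐ ((polyTerm α).add (zeroProd V)).mul ((polyTerm β).add (zeroProd V)) :=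
          DerivWcr.mul_congr h h'
      _ ≐[V] (polyTerm α).mul (polyTerm β) :=
          (DerivMod.mul_add_zeroProd (botFree_polyTerm α) hαV (botFree_polyTerm β) hβV).symm
      _ ≐[V] polyTerm (α * β) := DerivMod.polyTerm_mul_polyTerm hα hβ

theorem DerivWcr.exists_polyTerm_add_zeroProd {t : RTerm n} (ht : t.BotFree) :
    ∃ α : MvPolynomial (Fin n) ℤ, t ≐ (polyTerm α).add (zeroProd (t.vars \ α.vars)) := by
  obtain ⟨α, hα, h⟩ := exists_derivMod_polyTerm ht subset_rfl
  have hsplit : t.vars = (polyTerm α).vars ∪ (t.vars \ α.vars) := by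
    rw [vars_polyTerm, Finset.union_sdiff_of_subset hα]
  refine ⟨α, ?_⟩
  calc t ≐ t.add (zeroProd t.vars) := (add_zeroProd_vars ht).symm
    _ ≐ (polyTerm α).add (zeroProd t.vars) := h
    _ = (polyTerm α).add (zeroProd ((polyTerm α).vars ∪ (t.vars \ α.vars))) := by rw [← hsplit]
    _ ≐ (polyTerm α).add (zeroProd (t.vars \ α.vars)) :=
        add_zeroProd_vars_union (botFree_polyTerm α) _

end RTerm

open RTerm in
/-- Quasi-polynomial reduction: every ring-with-`⊥` term is provably equal, from
`E_wcr,⊥`, either to `⊥` or to a quasi-polynomial sumterm `α* + 0·∏_{i∈S} xᵢ`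
with `S` a finite set of variables disjoint from the variables of `α` (the
summand `0·∏_{i∈S} xᵢ` being omitted when `S = ∅`). -/
theorem quasi_polynomial_reduction (n : ℕ) (t : RTerm n) :
    DerivWcr t RTerm.bot ∨
      ∃ (α : MvPolynomial (Fin n) ℤ) (S : Finset (Fin n)),
        (∀ i ∈ S, i ∉ α.vars) ∧
        DerivWcr t
          (if S = ∅ then polyTerm α
           else (polyTerm α).add
             (RTerm.zero.mul (prodList ((S.sort (· ≤ ·)).map RTerm.var)))) := by
  refine (DerivWcr.eq_bot_or_botFree t).imp_right fun ht => ?_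
  obtain ⟨α, h⟩ := DerivWcr.exists_polyTerm_add_zeroProd ht
  refine ⟨α, t.vars \ α.vars, fun i hi => (Finset.mem_sdiff.mp hi).2, ?_⟩
  split_ifs with hS
  · rw [hS] at h
    exact h.trans ((DerivWcr.add_congr (.refl _) DerivWcr.zeroProd_empty).trans (.add_zero _))
  · exact h.trans (DerivWcr.add_congr (.refl _)
      (DerivWcr.mul_congr (.refl _) (DerivWcr.prodList_eq_listProd _).symm))
end
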